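/- Suppose u·t_{k,q} and u·t_{q',k} are both special (k−1)-superior to w of degree p−1 (for some q > k and q' < k), but u is not special k-superior to w of degree p. Then the associated elements coincide: v(u·t_{k,q}, w, k−1) = v(u·t_{q',k}, w, k−1). -/

import Mathlib

open Equiv MvPolynomial
open scoped Classical

/-- Coxeter length of a permutation of `Fin n`: the number of inversions. -/
noncomputable def len {n : ℕ} (w : Equiv.Perm (Fin n)) : ℕ :=
  (Finset.univ.filter (fun p : Fin n × Fin n => p.1 < p.2 ∧ w p.2 < w p.1)).card

/-- The simple reflection swapping the 0-based positions `a` and `a+1`;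
this is the 1-based simple reflection `s_{a+1}`. -/
def sr0 (n : ℕ) (a : ℕ) : Equiv.Perm (Fin n) :=
  if h : a + 1 < n then Equiv.swap ⟨a, Nat.lt_of_succ_lt h⟩ ⟨a + 1, h⟩ else 1

/-- `c[k,m] = s_{k-m+1} ⋯ s_{k-1} s_k` (1-based indices), with `c[k,0] = e`. -/
def cyc (n k m : ℕ) : Equiv.Perm (Fin n) :=
  ((List.range m).map (fun t => sr0 n (k - m + t))).prod

/-- The coordinate weight `L_i` (1-based), i.e. the variable `X (i-1)`. -/
noncomputable def LL (n : ℕ) (i : ℕ) : MvPolynomial (Fin n) ℚ :=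
  if h : i - 1 < n then X ⟨i - 1, h⟩ else 0

/-- The simple root `α_{a+1} = L_{a+1} - L_{a+2}` (0-based `a`). -/
noncomputable def alphaR (n a : ℕ) : MvPolynomial (Fin n) ℚ :=
  if h : a + 1 < n then X ⟨a, Nat.lt_of_succ_lt h⟩ - X ⟨a + 1, h⟩ else 0

/-- The fundamental weight `χ_i = L_1 + ⋯ + L_i` (1-based `i`). -/
noncomputable def chiW (n i : ℕ) : MvPolynomial (Fin n) ℚ :=
  ∑ j ∈ Finset.univ.filter (fun j : Fin n => (j : ℕ) < i), X j

/-- `∏_{β ∈ Δ₊ ∩ w⁻¹Δ₋} β`, the value `ξ^w(w)`. -/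
noncomputable def topVal {n : ℕ} (w : Equiv.Perm (Fin n)) : MvPolynomial (Fin n) ℚ :=
  ∏ p ∈ Finset.univ.filter (fun p : Fin n × Fin n => p.1 < p.2 ∧ w p.2 < w p.1),
    (X p.1 - X p.2)

/-- Bruhat order on the symmetric group. -/
def bruhatLE {n : ℕ} (w v : Equiv.Perm (Fin n)) : Prop :=
  Relation.ReflTransGen
    (fun x y => (∃ i j : Fin n, y = x * Equiv.swap i j) ∧ len y = len x + 1) w v

/-- The characterization of the family of equivariant Schubert classes `ξ^w : W → S(h*)`:
support condition, value at `w`, and the divided-difference recursion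
`𝒜_a ξ^w = ξ^{w s_a}` if `w s_a < w` and `0` otherwise, where
`(𝒜_a f)(v) = (f(v s_a) - f(v))/(v·α_a)`. -/
def IsXi {n : ℕ} (xi : Equiv.Perm (Fin n) → Equiv.Perm (Fin n) → MvPolynomial (Fin n) ℚ) :
    Prop :=
  (∀ w v, ¬ bruhatLE w v → xi w v = 0) ∧
  (∀ w, xi w w = topVal w) ∧
  (∀ w v (a : ℕ), a + 1 < n →
    (len (w * sr0 n a) < len w →
      xi w (v * sr0 n a) - xi w v = (rename ⇑v (alphaR n a)) * xi (w * sr0 n a) v) ∧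
    (len w < len (w * sr0 n a) → xi w (v * sr0 n a) = xi w v))

/-- The permutation `t_{i_1,q} ⋯ t_{i_s,q}` determined by the list `l = [i_1, …, i_s]`
and the index `q`. -/
def cycPerm {n : ℕ} (l : List (Fin n)) (q : Fin n) : Equiv.Perm (Fin n) :=
  (l.map (fun i => Equiv.swap i q)).prod

/-- The data `(l, q)` with `l = [i_1, …, i_s]` defines a cycle `ζ = t_{i_1,q} ⋯ t_{i_s,q}`
such that `wζ` is special `k`-superior to `w` of degree `s` (1-based `k`):
`i_1, …, i_s ≤ k < q`, `w(q) > w(i_1) > ⋯ > w(i_s)`, and `ℓ(wζ) = ℓ(w) + s`. -/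
def IsSpecialCycle {n : ℕ} (w : Equiv.Perm (Fin n)) (k : ℕ) (l : List (Fin n)) (q : Fin n) :
    Prop :=
  l ≠ [] ∧ (q :: l).Nodup ∧ (∀ i ∈ l, (i : ℕ) < k) ∧ k ≤ (q : ℕ) ∧
  (q :: l).Chain' (fun a b => w b < w a) ∧
  len (w * cycPerm l q) = len w + l.length

/-- `u` is special `k`-superior to `w` of degree `p` (1-based `k`):
`u = w ζ₁ ⋯ ζ_r` for pairwise disjoint cycles `ζ_i` as in `IsSpecialCycle`,
with degrees summing to `p`. -/
def SpecialSuperior {n : ℕ} (w u : Equiv.Perm (Fin n)) (k p : ℕ) : Prop :=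
  ∃ L : List (List (Fin n) × Fin n),
    (∀ c ∈ L, IsSpecialCycle w k c.1 c.2) ∧
    L.Pairwise (fun c d => ∀ x ∈ c.2 :: c.1, x ∉ d.2 :: d.1) ∧
    u = w * (L.map (fun c => cycPerm c.1 c.2)).prod ∧
    (L.map (fun c => c.1.length)).sum = p

/-- The set of indices of `u > w`: `𝓘 = {i ≤ k | w⁻¹u(i) ≠ i}` (stored 0-based,
so `i` ranges over 0-based positions `< k`). -/
noncomputable def idxSet {n : ℕ} (w u : Equiv.Perm (Fin n)) (k : ℕ) : Finset ℕ :=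
  (Finset.range k).filter (fun i => ∃ h : i < n, (w⁻¹ * u) ⟨i, h⟩ ≠ ⟨i, h⟩)

/-- The 0-based positions `< k` not in `𝓘`, listed in decreasing order; its `(j-1)`-st
entry is the 0-based version of `r_j`. -/
noncomputable def freeList {n : ℕ} (w u : Equiv.Perm (Fin n)) (k : ℕ) : List ℕ :=
  (((Finset.range k) \ idxSet w u k).sort (· ≤ ·)).reverse

/-- `λ_j = #{i ∈ 𝓘 | i < r_j}` (1-based `j`). -/
noncomputable def lamFn {n : ℕ} (w u : Equiv.Perm (Fin n)) (k : ℕ) (j : ℕ) : ℕ :=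
  ((idxSet w u k).filter (fun i => i < (freeList w u k).getD (j - 1) 0)).card

/-- The associated element `v(u,w,k) = w π₁ π₂ ⋯ π_{k-p}` where
`π_j = s_{λ_{k-p-j+1}+j-1} ⋯ s_{j+1} s_j` (1-based) if `λ_{k-p-j+1} ≠ 0` and `π_j = e`
otherwise. -/
noncomputable def assocElt {n : ℕ} (w u : Equiv.Perm (Fin n)) (k p : ℕ) :
    Equiv.Perm (Fin n) :=
  w * ((List.range (k - p)).map (fun j0 =>
        ((List.range (lamFn w u k (k - p - j0))).reverse.map
          (fun t => sr0 n (j0 + t))).prod)).prod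

lemma cycPerm_cons {n : ℕ} (a : Fin n) (l : List (Fin n)) (q : Fin n) :
    cycPerm (a :: l) q = Equiv.swap a q * cycPerm l q := by
  simp [cycPerm]

lemma cycPerm_fix {n : ℕ} (l : List (Fin n)) (q x : Fin n)
    (hq : x ≠ q) (hl : x ∉ l) : cycPerm l q x = x := by
  induction l with
  | nil => simp [cycPerm]
  | cons a l ih =>
    rw [cycPerm_cons, Equiv.Perm.mul_apply,
      ih (fun h => hl (List.mem_cons_of_mem _ h))]
    exact Equiv.swap_apply_of_ne_of_ne
      (fun h => hl (h ▸ List.mem_cons_self)) hq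

lemma cycPerm_move {n : ℕ} (l : List (Fin n)) (q : Fin n)
    (hnd : (q :: l).Nodup) : ∀ i ∈ l, cycPerm l q i ≠ i := by
  induction l with
  | nil => simp
  | cons a l ih =>
    have hql : q ∉ a :: l := (List.nodup_cons.mp hnd).1
    have hal : a ∉ l := (List.nodup_cons.mp (List.nodup_cons.mp hnd).2).1
    have hnd' : (q :: l).Nodup := by
      rw [List.nodup_cons] at hnd ⊢
      exact ⟨fun h => hnd.1 (List.mem_cons_of_mem _ h), hnd.2.of_cons⟩
    intro i hi
    rw [cycPerm_cons, Equiv.Perm.mul_apply]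
    rcases List.mem_cons.mp hi with rfl | hi'
    · rw [cycPerm_fix l q i (fun h => hql (h ▸ List.mem_cons_self)) hal,
        Equiv.swap_apply_left]
      exact fun h => hql (h ▸ List.mem_cons_self)
    · have h1 := ih hnd' i hi'
      intro h
      apply h1
      have hia : i ≠ a := fun h => hal (h ▸ hi')
      have hiq : i ≠ q := fun h => hql (h ▸ List.mem_cons_of_mem _ hi')
      have := congrArg (Equiv.swap a q) h
      rwa [Equiv.swap_apply_self, Equiv.swap_apply_of_ne_of_ne hia hiq] at this

lemma prodFix {n : ℕ} (x : Fin n) :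
    ∀ L : List (List (Fin n) × Fin n), (∀ c ∈ L, x ∉ c.2 :: c.1) →
      (L.map (fun c => cycPerm c.1 c.2)).prod x = x := by
  intro L
  induction L with
  | nil => simp
  | cons c L ih =>
    intro h
    rw [List.map_cons, List.prod_cons, Equiv.Perm.mul_apply,
      ih (fun d hd => h d (List.mem_cons_of_mem _ hd))]
    have hx := h c (List.mem_cons_self)
    exact cycPerm_fix _ _ _ (fun he => hx (he ▸ List.mem_cons_self))
      (fun he => hx (List.mem_cons_of_mem _ he))

lemma prodMove {n : ℕ} (x : Fin n) :
    ∀ L : List (List (Fin n) × Fin n),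
      (∀ c ∈ L, (c.2 :: c.1).Nodup) →
      L.Pairwise (fun c d => ∀ y ∈ c.2 :: c.1, y ∉ d.2 :: d.1) →
      ∀ c ∈ L, x ∈ c.1 →
      (L.map (fun c => cycPerm c.1 c.2)).prod x ≠ x := by
  intro L
  induction L with
  | nil => intro _ _ c hc; simp at hc
  | cons c0 L ih =>
    intro hnd hdisj c hc hx
    rw [List.map_cons, List.prod_cons, Equiv.Perm.mul_apply]
    rcases List.mem_cons.mp hc with rfl | hc'
    · have hfix : (L.map (fun c => cycPerm c.1 c.2)).prod x = x := by
        apply prodFix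
        intro d hd
        exact (List.pairwise_cons.mp hdisj).1 d hd x (List.mem_cons_of_mem _ hx)
      rw [hfix]
      exact cycPerm_move c.1 c.2 (hnd c (List.mem_cons_self)) x hx
    · have hxc0 : x ∉ c0.2 :: c0.1 := fun hmem =>
        (List.pairwise_cons.mp hdisj).1 c hc' x hmem (List.mem_cons_of_mem _ hx)
      have h1 := ih (fun d hd => hnd d (List.mem_cons_of_mem _ hd))
        (List.pairwise_cons.mp hdisj).2 c hc' hx
      intro h
      apply h1
      have hfx : cycPerm c0.1 c0.2 x = x :=
        cycPerm_fix _ _ _ (fun he => hxc0 (he ▸ List.mem_cons_self))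
          (fun he => hxc0 (List.mem_cons_of_mem _ he))
      exact (Equiv.injective _) (h.trans hfx.symm)

lemma card_idxSet {n : ℕ} (w x : Equiv.Perm (Fin n)) (k d : ℕ)
    (h : SpecialSuperior w x k d) : (idxSet w x k).card = d := by
  obtain ⟨L, hc, hdisj, hx, hsum⟩ := h
  have hinv : w⁻¹ * x = (L.map (fun c => cycPerm c.1 c.2)).prod := by
    rw [hx, inv_mul_cancel_left]
  have hset : idxSet w x k
      = (L.flatMap (fun c => c.1)).toFinset.image Fin.val := by
    ext i
    simp only [idxSet, Finset.mem_filter, Finset.mem_range, Finset.mem_image,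
      List.mem_toFinset, List.mem_flatMap]
    constructor
    · rintro ⟨hik, hin, hne⟩
      rw [hinv] at hne
      by_contra hcon
      push_neg at hcon
      apply hne
      apply prodFix
      intro c hcL hmem
      rcases List.mem_cons.mp hmem with h' | h'
      · have hkq := (hc c hcL).2.2.2.1
        have : i = (c.2 : ℕ) := congrArg Fin.val h'
        omega
      · exact hcon ⟨i, hin⟩ ⟨c, hcL, h'⟩ rfl
    · rintro ⟨a, ⟨c, hcL, hac⟩, rfl⟩
      have hak : (a : ℕ) < k := (hc c hcL).2.2.1 a hac
      refine ⟨hak, a.isLt, ?_⟩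
      rw [hinv]
      have ha : (⟨(a : ℕ), a.isLt⟩ : Fin n) = a := rfl
      rw [ha]
      exact prodMove a L (fun c hcl => (hc c hcl).2.1) hdisj c hcL hac
  rw [hset, Finset.card_image_of_injective _ Fin.val_injective,
    List.toFinset_card_of_nodup, List.length_flatMap]
  · simpa [Function.comp] using hsum
  · rw [List.nodup_flatMap]
    refine ⟨fun c hcL => ((hc c hcL).2.1).of_cons, ?_⟩
    apply hdisj.imp
    intro c d h a ha had
    exact h a (List.mem_cons_of_mem _ ha) (List.mem_cons_of_mem _ had)

lemma assocElt_congr {n : ℕ} (w x y : Equiv.Perm (Fin n)) (k p : ℕ)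
    (h : idxSet w x k = idxSet w y k) : assocElt w x k p = assocElt w y k p := by
  unfold assocElt lamFn freeList
  rw [h]

theorem stmt18 {n : ℕ} (w u : Equiv.Perm (Fin n)) (k p : ℕ) (kf q q' : Fin n)
    (hkf : (kf : ℕ) = k - 1) (hk1 : 1 ≤ k)
    (hq : k ≤ (q : ℕ)) (hq' : (q' : ℕ) < k - 1)
    (h1 : SpecialSuperior w (u * Equiv.swap kf q) (k - 1) (p - 1))
    (h2 : SpecialSuperior w (u * Equiv.swap q' kf) (k - 1) (p - 1))
    (h3 : ¬ SpecialSuperior w u k p) :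
    assocElt w (u * Equiv.swap kf q) (k - 1) (p - 1)
      = assocElt w (u * Equiv.swap q' kf) (k - 1) (p - 1) := by
  apply assocElt_congr
  have key : ∀ (i : ℕ) (h : i < n), i < k - 1 → i ≠ (q' : ℕ) →
      ((w⁻¹ * (u * Equiv.swap kf q)) ⟨i, h⟩ = w⁻¹ (u ⟨i, h⟩)
        ∧ (w⁻¹ * (u * Equiv.swap q' kf)) ⟨i, h⟩ = w⁻¹ (u ⟨i, h⟩)) := by
    intro i h hik hiq'
    have h1' : (⟨i, h⟩ : Fin n) ≠ kf := by
      intro he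
      have : i = (kf : ℕ) := congrArg Fin.val he
      omega
    have h2' : (⟨i, h⟩ : Fin n) ≠ q := by
      intro he
      have : i = (q : ℕ) := congrArg Fin.val he
      omega
    have h3' : (⟨i, h⟩ : Fin n) ≠ q' := by
      intro he
      exact hiq' (congrArg Fin.val he)
    constructor
    · rw [Equiv.Perm.mul_apply, Equiv.Perm.mul_apply,
        Equiv.swap_apply_of_ne_of_ne h1' h2']
    · rw [Equiv.Perm.mul_apply, Equiv.Perm.mul_apply,
        Equiv.swap_apply_of_ne_of_ne h3' h1']
  have hAB : ∀ i, i ≠ (q' : ℕ) →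
      (i ∈ idxSet w (u * Equiv.swap kf q) (k - 1)
        ↔ i ∈ idxSet w (u * Equiv.swap q' kf) (k - 1)) := by
    intro i hiq'
    by_cases hik : i < k - 1
    · simp only [idxSet, Finset.mem_filter, Finset.mem_range]
      constructor
      · rintro ⟨-, hh, hne⟩
        obtain ⟨e1, e2⟩ := key i hh hik hiq'
        rw [e1] at hne
        exact ⟨hik, hh, by rw [e2]; exact hne⟩
      · rintro ⟨-, hh, hne⟩
        obtain ⟨e1, e2⟩ := key i hh hik hiq'
        rw [e2] at hne
        exact ⟨hik, hh, by rw [e1]; exact hne⟩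
    · simp only [idxSet, Finset.mem_filter, Finset.mem_range]
      tauto
  have hcardA := card_idxSet w _ (k - 1) (p - 1) h1
  have hcardB := card_idxSet w _ (k - 1) (p - 1) h2
  have hq'AB : ((q' : ℕ) ∈ idxSet w (u * Equiv.swap kf q) (k - 1))
      ↔ ((q' : ℕ) ∈ idxSet w (u * Equiv.swap q' kf) (k - 1)) := by
    by_cases ha : (q' : ℕ) ∈ idxSet w (u * Equiv.swap kf q) (k - 1)
      <;> by_cases hb : (q' : ℕ) ∈ idxSet w (u * Equiv.swap q' kf) (k - 1)
    · tauto
    · exfalso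
      have hsub : idxSet w (u * Equiv.swap q' kf) (k - 1)
          ⊆ idxSet w (u * Equiv.swap kf q) (k - 1) := by
        intro i hi
        by_cases hi' : i = (q' : ℕ)
        · exact absurd (hi' ▸ hi) hb
        · exact (hAB i hi').mpr hi
      have hss : idxSet w (u * Equiv.swap q' kf) (k - 1)
          ⊂ idxSet w (u * Equiv.swap kf q) (k - 1) :=
        Finset.ssubset_iff_of_subset hsub |>.mpr ⟨(q' : ℕ), ha, hb⟩
      have := Finset.card_lt_card hss
      omega
    · exfalso
      have hsub : idxSet w (u * Equiv.swap kf q) (k - 1)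
          ⊆ idxSet w (u * Equiv.swap q' kf) (k - 1) := by
        intro i hi
        by_cases hi' : i = (q' : ℕ)
        · exact absurd (hi' ▸ hi) ha
        · exact (hAB i hi').mp hi
      have hss : idxSet w (u * Equiv.swap kf q) (k - 1)
          ⊂ idxSet w (u * Equiv.swap q' kf) (k - 1) :=
        Finset.ssubset_iff_of_subset hsub |>.mpr ⟨(q' : ℕ), hb, ha⟩
      have := Finset.card_lt_card hss
      omega
    · tauto
  ext i
  by_cases hi : i = (q' : ℕ)
  · subst hi; exact hq'AB
  · exact hAB i hi
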